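/- arXiv:2312.11255 — 9 statements merged into one kernel-verified Lean document; each statement's English description precedes it below -/
import Mathlib

section
/- Let B_0 be a CBF for the system with state constraint h(x) ≤ 0, and define B_k(x) as the minimum over admissible input sequences (u_0,...,u_{k-1}) ∈ U^k of max{ max_{0 ≤ t ≤ k-1} h(x_t), B_0(x_k) }, where x_0 = x and x_{t+1} = f(x_t, u_t). Then for every k ≥ 1, B_k is a CBF for the same constraint: h(x) ≤ 0 and min_{u ∈ U} B_k(f(x,u)) ≤ 0 for all x with B_k(x) ≤ 0. -/
/-- Closed-loop trajectory: x_0 = x, x_{t+1} = f(x_t, u_t). -/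
def traj {σ υ : Type*} (f : σ → υ → σ) (x : σ) (u : ℕ → υ) : ℕ → σ
  | 0 => x
  | t + 1 => f (traj f x u t) (u t)

/-- The cost max{ max_{0 ≤ t ≤ k-1} h(x_t), B_0(x_k) } of an input sequence. -/
noncomputable def reachCost {σ υ : Type*} (f : σ → υ → σ) (h B0 : σ → ℝ)
    (k : ℕ) (x : σ) (u : ℕ → υ) : ℝ :=
  max (⨆ t : Fin k, h (traj f x u t)) (B0 (traj f x u k))

lemma traj_shift {σ υ : Type*} (f : σ → υ → σ) (x : σ) (u u' : ℕ → υ) (t : ℕ)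
    (hu : ∀ s < t, u' s = u (s + 1)) :
    traj f (f x (u 0)) u' t = traj f x u (t + 1) := by
  induction t with
  | zero => simp [traj]
  | succ n ih =>
    rw [show n + 1 + 1 = (n + 1) + 1 from rfl]
    rw [traj, traj, ih (fun s hs => hu s (Nat.lt_succ_of_lt hs)), hu n (Nat.lt_succ_self n)]

/-- if B_0 is a CBF for the constraint h ≤ 0, then each B_k
defined as the attained minimum of `reachCost` over admissible input
sequences is again a CBF for the same constraint. -/
theorem reachability_generates_cbf
    {σ υ : Type*} (f : σ → υ → σ) (h : σ → ℝ) (U : Set υ) (B0 : σ → ℝ)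
    (k : ℕ) (hk : 1 ≤ k)
    -- B_0 is a CBF for the original constraint:
    (hSB0_ne : {x : σ | B0 x ≤ 0}.Nonempty)
    (hSB0_safe : ∀ x, B0 x ≤ 0 → h x ≤ 0)
    (hSB0_feas : ∀ x, B0 x ≤ 0 → ∃ u ∈ U, B0 (f x u) ≤ 0)
    -- B_k is the minimum of the reachability cost, attained:
    (Bk : σ → ℝ)
    (hBk_att : ∀ x : σ, ∃ u : ℕ → υ, (∀ t, u t ∈ U) ∧
      Bk x = reachCost f h B0 k x u)
    (hBk_lb : ∀ (x : σ) (u : ℕ → υ), (∀ t, u t ∈ U) →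
      Bk x ≤ reachCost f h B0 k x u) :
    ∀ x, Bk x ≤ 0 → h x ≤ 0 ∧ ∃ u ∈ U, Bk (f x u) ≤ 0 := by
  obtain ⟨m, rfl⟩ : ∃ m, k = m + 1 := ⟨k - 1, (Nat.succ_pred_eq_of_pos hk).symm⟩
  intro x hx
  obtain ⟨u, huU, hBe⟩ := hBk_att x
  have hc : reachCost f h B0 (m + 1) x u ≤ 0 := hBe ▸ hx
  rw [reachCost, max_le_iff] at hc
  obtain ⟨hsup, hB0k⟩ := hc
  have hsafe : ∀ t : Fin (m + 1), h (traj f x u t) ≤ 0 := fun t =>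
    le_trans (le_ciSup (f := fun t : Fin (m+1) => h (traj f x u t)) (Set.Finite.bddAbove (Set.finite_range _)) t) hsup
  constructor
  · exact hsafe ⟨0, Nat.succ_pos m⟩
  · obtain ⟨w, hwU, hw⟩ := hSB0_feas _ hB0k
    refine ⟨u 0, huU 0, ?_⟩
    set u' : ℕ → υ := fun t => if t < m then u (t + 1) else w with hu'
    have hu'U : ∀ t, u' t ∈ U := by
      intro t; simp only [hu']; split
      · exact huU _
      · exact hwU
    have hshift : ∀ t ≤ m, traj f (f x (u 0)) u' t = traj f x u (t + 1) := by
      intro t ht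
      refine traj_shift f x u u' t (fun s hs => ?_)
      simp only [hu', if_pos (lt_of_lt_of_le hs ht)]
    refine le_trans (hBk_lb _ u' hu'U) ?_
    rw [reachCost, max_le_iff]
    constructor
    · refine ciSup_le (fun t => ?_)
      rw [hshift t (Nat.lt_succ_iff.mp t.2)]
      rcases lt_or_eq_of_le (Nat.succ_le_succ (Nat.lt_succ_iff.mp t.2)) with hlt | heq
      · exact hsafe ⟨t + 1, hlt⟩
      · rw [show (t:ℕ) + 1 = m + 1 from heq]; exact hSB0_safe _ hB0k
    · rw [traj, hshift m le_rfl]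
      simp only [hu', lt_irrefl, if_neg (lt_irrefl m)]
      exact hw
end

section
/- Let B_0 be an exponential CBF with rate β ∈ (0,1), let α = 1/β, and define B_k(x) as the minimum over input sequences in U^k of max{ max_{0 ≤ t ≤ k-1} α^t h(x_t), α^k B_0(x_k) } with x_0 = x, x_{t+1} = f(x_t,u_t). Then for every x with B_k(x) ≤ 0 there exists u ∈ U such that B_k(f(x,u)) ≤ β B_k(x), i.e., B_k is an exponential CBF with the same rate β. -/
/-- Cost max{ max_{0 ≤ t ≤ k-1} α^t h(x_t), α^k B_0(x_k) }. -/
noncomputable def reachCostExp {σ υ : Type*} (f : σ → υ → σ) (h B0 : σ → ℝ)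
    (α : ℝ) (k : ℕ) (x : σ) (u : ℕ → υ) : ℝ :=
  max (⨆ t : Fin k, α ^ (t : ℕ) * h (traj f x u t)) (α ^ k * B0 (traj f x u k))

def shiftedControl {υ : Type*} (u : ℕ → υ) (k : ℕ) (u' : υ) : ℕ → υ :=
  fun t => if t + 1 < k then u (t + 1) else u'

section Trajectory

variable {σ υ : Type*} (f : σ → υ → σ)

theorem traj_succ_eq_traj_apply (x : σ) (u : ℕ → υ) (t : ℕ) :
    traj f x u (t + 1) = traj f (f x (u 0)) (fun s => u (s + 1)) t := by
  induction t with
  | zero => rfl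
  | succ t ih => simp only [traj] at ih ⊢; rw [ih]

theorem traj_congr {x : σ} {u v : ℕ → υ} {t : ℕ} (huv : ∀ s < t, u s = v s) :
    traj f x u t = traj f x v t := by
  induction t with
  | zero => rfl
  | succ t ih =>
    simp only [traj]
    rw [ih fun s hs => huv s (Nat.lt_succ_of_lt hs), huv t (Nat.lt_succ_self t)]

theorem traj_shiftedControl_of_lt (x : σ) (u : ℕ → υ) (u' : υ) {k t : ℕ} (ht : t < k) :
    traj f (f x (u 0)) (shiftedControl u k u') t = traj f x u (t + 1) := by
  rw [traj_succ_eq_traj_apply]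
  exact traj_congr f fun s hs => if_pos (by omega)

theorem traj_shiftedControl_self (x : σ) (u : ℕ → υ) (u' : υ) {k : ℕ} (hk : k ≠ 0) :
    traj f (f x (u 0)) (shiftedControl u k u') k = f (traj f x u k) u' := by
  obtain ⟨n, rfl⟩ := Nat.exists_eq_succ_of_ne_zero hk
  rw [traj, traj_shiftedControl_of_lt f x u u' (Nat.lt_succ_self n)]
  simp [shiftedControl]

end Trajectory

section Cost

variable {σ υ : Type*} (f : σ → υ → σ) (h B0 : σ → ℝ) (α : ℝ) {k : ℕ}

theorem reachCostExp_le_iff (hk : k ≠ 0) (x : σ) (u : ℕ → υ) {c : ℝ} :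
    reachCostExp f h B0 α k x u ≤ c ↔
      (∀ t < k, α ^ t * h (traj f x u t) ≤ c) ∧ α ^ k * B0 (traj f x u k) ≤ c := by
  have : Nonempty (Fin k) := ⟨⟨0, Nat.pos_of_ne_zero hk⟩⟩
  rw [reachCostExp, max_le_iff, ciSup_le_iff (Set.finite_range _).bddAbove, Fin.forall_iff]

theorem reachCostExp_shiftedControl_le {β : ℝ} (hβ : 0 < β) (hβα : β * α = 1) (hk : k ≠ 0)
    (x : σ) (u : ℕ → υ) {u' : υ}
    (h_le_B0 : h (traj f x u k) ≤ B0 (traj f x u k))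
    (hu' : B0 (f (traj f x u k) u') ≤ β * B0 (traj f x u k)) :
    reachCostExp f h B0 α k (f x (u 0)) (shiftedControl u k u') ≤
      β * reachCostExp f h B0 α k x u := by
  have hα : 0 < α := pos_of_mul_pos_right (hβα ▸ one_pos) hβ.le
  have hpow : ∀ t, α ^ t = β * α ^ (t + 1) := fun t => by
    rw [pow_succ', ← mul_assoc, hβα, one_mul]
  obtain ⟨hrun, hterm⟩ := (reachCostExp_le_iff f h B0 α hk x u).1 le_rfl
  set c := reachCostExp f h B0 α k x u
  have hterm_h : α ^ k * h (traj f x u k) ≤ c :=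
    (mul_le_mul_of_nonneg_left h_le_B0 (pow_pos hα k).le).trans hterm
  refine (reachCostExp_le_iff f h B0 α hk _ _).2 ⟨fun t ht => ?_, ?_⟩
  · rw [traj_shiftedControl_of_lt f x u u' ht, hpow, mul_assoc]
    gcongr
    rcases Nat.lt_or_ge (t + 1) k with hlt | hge
    · exact hrun (t + 1) hlt
    · rwa [show t + 1 = k by omega]
  · rw [traj_shiftedControl_self f x u u' hk]
    calc α ^ k * B0 (f (traj f x u k) u') ≤ α ^ k * (β * B0 (traj f x u k)) := by gcongr
      _ = β * (α ^ k * B0 (traj f x u k)) := by ring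
      _ ≤ β * c := by gcongr

end Cost

theorem reachability_generates_exponential_cbf_general
    {σ υ : Type*} (f : σ → υ → σ) (h : σ → ℝ) (U : Set υ) (B0 : σ → ℝ)
    (β : ℝ) (hβ : β ∈ Set.Ioo (0 : ℝ) 1) (α : ℝ) (hα : α = 1 / β)
    (k : ℕ) (hk : 1 ≤ k)
    -- B_0 is an exponential CBF with rate β:
    (hSB0_bound : ∀ x, B0 x ≤ 0 → h x ≤ B0 x)
    (hSB0_feas : ∀ x, B0 x ≤ 0 → ∃ u ∈ U, B0 (f x u) ≤ β * B0 x)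
    -- B_k is the attained minimum of the reachability cost:
    (Bk : σ → ℝ)
    (hBk_att : ∀ x : σ, ∃ u : ℕ → υ, (∀ t, u t ∈ U) ∧
      Bk x = reachCostExp f h B0 α k x u)
    (hBk_lb : ∀ (x : σ) (u : ℕ → υ), (∀ t, u t ∈ U) →
      Bk x ≤ reachCostExp f h B0 α k x u) :
    ∀ x, Bk x ≤ 0 → ∃ u ∈ U, Bk (f x u) ≤ β * Bk x := by
  intro x hx
  have hk0 : k ≠ 0 := Nat.one_le_iff_ne_zero.1 hk
  have hβα : β * α = 1 := by rw [hα, mul_one_div_cancel hβ.1.ne']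
  obtain ⟨u, hu, hBx⟩ := hBk_att x
  have hterm : α ^ k * B0 (traj f x u k) ≤ 0 :=
    ((reachCostExp_le_iff f h B0 α hk0 x u).1 hBx.ge).2.trans hx
  have hsafe : B0 (traj f x u k) ≤ 0 :=
    nonpos_of_mul_nonpos_right hterm (pow_pos (by rw [hα]; exact one_div_pos.2 hβ.1) k)
  obtain ⟨u', hu'U, hu'⟩ := hSB0_feas _ hsafe
  have hvU : ∀ t, shiftedControl u k u' t ∈ U := fun t => by
    unfold shiftedControl; split_ifs
    exacts [hu _, hu'U]
  refine ⟨u 0, hu 0, ?_⟩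
  calc Bk (f x (u 0)) ≤ reachCostExp f h B0 α k (f x (u 0)) (shiftedControl u k u') :=
        hBk_lb _ _ hvU
    _ ≤ β * Bk x := hBx ▸ reachCostExp_shiftedControl_le f h B0 α hβ.1 hβα hk0 x u
        (hSB0_bound _ hsafe) hu'

/-- if B_0 is an exponential CBF with rate β ∈ (0,1) and
α = 1/β, then B_k (the attained minimum of the reachability cost) satisfies:
for every x with B_k(x) ≤ 0 there exists u ∈ U with B_k(f(x,u)) ≤ β B_k(x). -/
theorem reachability_generates_exponential_cbf
    {σ υ : Type*} (f : σ → υ → σ) (h : σ → ℝ) (U : Set υ) (B0 : σ → ℝ)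
    (β : ℝ) (hβ : β ∈ Set.Ioo (0 : ℝ) 1) (α : ℝ) (hα : α = 1 / β)
    (k : ℕ) (hk : 1 ≤ k)
    -- B_0 is an exponential CBF with rate β:
    (hSB0_ne : {x : σ | B0 x ≤ 0}.Nonempty)
    (hSB0_bound : ∀ x, B0 x ≤ 0 → h x ≤ B0 x)
    (hSB0_feas : ∀ x, B0 x ≤ 0 → ∃ u ∈ U, B0 (f x u) ≤ β * B0 x)
    -- B_k is the attained minimum of the reachability cost:
    (Bk : σ → ℝ)
    (hBk_att : ∀ x : σ, ∃ u : ℕ → υ, (∀ t, u t ∈ U) ∧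
      Bk x = reachCostExp f h B0 α k x u)
    (hBk_lb : ∀ (x : σ) (u : ℕ → υ), (∀ t, u t ∈ U) →
      Bk x ≤ reachCostExp f h B0 α k x u) :
    ∀ x, Bk x ≤ 0 → ∃ u ∈ U, Bk (f x u) ≤ β * Bk x :=
  reachability_generates_exponential_cbf_general f h U B0 β hβ α hα k hk hSB0_bound hSB0_feas Bk
    hBk_att hBk_lb
end

section
/- If f, h, and B_0 are Lipschitz continuous with constants L_f, L_h, L_{B_0} respectively, then the value function B_k(x) = min over input sequences in U^k of max{ max_{0 ≤ t ≤ k-1} α^t (h(x_t)+λ_t), α^k B_0(x_k) } is Lipschitz continuous with constant L_{B_k} = max{ max_{0 ≤ t ≤ k-1} α^t L_h L_f^t, α^k L_{B_0} L_f^k }. -/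
open NNReal

/-- Cost max{ max_{0 ≤ t ≤ k-1} α^t (h(x_t) + λ_t), α^k B_0(x_k) }. -/
noncomputable def reachCostGen {σ υ : Type*} (f : σ → υ → σ) (h B0 : σ → ℝ)
    (α : ℝ) (lam : ℕ → ℝ) (k : ℕ) (x : σ) (u : ℕ → υ) : ℝ :=
  max (⨆ t : Fin k, α ^ (t : ℕ) * (h (traj f x u t) + lam t))
    (α ^ k * B0 (traj f x u k))

lemma traj_dist {σ υ : Type*} [MetricSpace σ] [MetricSpace υ]
    (f : σ → υ → σ) (U : Set υ) (Lf : ℝ≥0)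
    (hf_lip : ∀ u ∈ U, LipschitzWith Lf fun x => f x u)
    (u : ℕ → υ) (hu : ∀ t, u t ∈ U) (x y : σ) :
    ∀ t, dist (traj f x u t) (traj f y u t) ≤ (Lf : ℝ) ^ t * dist x y := by
  intro t
  induction t with
  | zero => simp [traj]
  | succ n ih =>
    have := (hf_lip (u n) (hu n)).dist_le_mul (traj f x u n) (traj f y u n)
    calc dist (traj f x u (n+1)) (traj f y u (n+1))
        ≤ (Lf : ℝ) * dist (traj f x u n) (traj f y u n) := this
      _ ≤ (Lf : ℝ) * ((Lf : ℝ) ^ n * dist x y) := by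
          exact mul_le_mul_of_nonneg_left ih Lf.coe_nonneg
      _ = (Lf : ℝ) ^ (n+1) * dist x y := by ring

/-- if f (in x, uniformly in u), h and B_0 are Lipschitz with
constants L_f, L_h, L_{B_0}, then the reachability value function B_k is
Lipschitz with constant max{ max_{0 ≤ t ≤ k-1} α^t L_h L_f^t, α^k L_{B_0} L_f^k }. -/
theorem reachability_value_function_lipschitz
    {σ υ : Type*} [MetricSpace σ] [MetricSpace υ]
    (f : σ → υ → σ) (h : σ → ℝ) (U : Set υ) (B0 : σ → ℝ)
    (Lf Lh LB0 : ℝ≥0)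
    (hf_lip : ∀ u ∈ U, LipschitzWith Lf fun x => f x u)
    (hh_lip : LipschitzWith Lh h) (hB0_lip : LipschitzWith LB0 B0)
    (α : ℝ≥0) (hα : 1 ≤ α) (lam : ℕ → ℝ) (hlam_nonneg : ∀ t, 0 ≤ lam t)
    (k : ℕ) (hk : 1 ≤ k)
    -- B_k is the attained minimum of the reachability cost:
    (Bk : σ → ℝ)
    (hBk_att : ∀ x : σ, ∃ u : ℕ → υ, (∀ t, u t ∈ U) ∧
      Bk x = reachCostGen f h B0 (α : ℝ) lam k x u)
    (hBk_lb : ∀ (x : σ) (u : ℕ → υ), (∀ t, u t ∈ U) →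
      Bk x ≤ reachCostGen f h B0 (α : ℝ) lam k x u) :
    LipschitzWith
      (max ((Finset.range k).sup fun t => α ^ t * Lh * Lf ^ t)
        (α ^ k * LB0 * Lf ^ k)) Bk := by
  set L : ℝ≥0 := max ((Finset.range k).sup fun t => α ^ t * Lh * Lf ^ t)
      (α ^ k * LB0 * Lf ^ k) with hL
  have hLt : ∀ t < k, ((α : ℝ) ^ t * Lh * Lf ^ t) ≤ (L : ℝ) := by
    intro t ht
    have h1 : (fun s => α ^ s * Lh * Lf ^ s) t ≤
        ((Finset.range k).sup fun s => α ^ s * Lh * Lf ^ s) :=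
      Finset.le_sup (f := fun s => α ^ s * Lh * Lf ^ s) (Finset.mem_range.mpr ht)
    have h2 : (α ^ t * Lh * Lf ^ t : ℝ≥0) ≤ L := le_trans h1 (le_max_left _ _)
    exact_mod_cast h2
  have hLk : ((α : ℝ) ^ k * LB0 * Lf ^ k) ≤ (L : ℝ) := by
    have h2 : (α ^ k * LB0 * Lf ^ k : ℝ≥0) ≤ L := le_max_right _ _
    exact_mod_cast h2
  have hne : Nonempty (Fin k) := ⟨⟨0, hk⟩⟩
  have key : ∀ (x y : σ) (u : ℕ → υ), (∀ t, u t ∈ U) →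
      reachCostGen f h B0 (α : ℝ) lam k x u ≤
        reachCostGen f h B0 (α : ℝ) lam k y u + L * dist x y := by
    intro x y u hu
    have htraj := traj_dist f U Lf hf_lip u hu x y
    have hdnn : (0:ℝ) ≤ dist x y := dist_nonneg
    unfold reachCostGen
    apply max_le
    · apply ciSup_le
      intro t
      have hαnn : (0:ℝ) ≤ (α : ℝ) ^ (t : ℕ) := pow_nonneg α.coe_nonneg _
      have hh := hh_lip.dist_le_mul (traj f x u t) (traj f y u t)
      have hhd : h (traj f x u t) - h (traj f y u t) ≤
          (Lh : ℝ) * dist (traj f x u t) (traj f y u t) := by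
        have := le_trans (le_abs_self _) (by rwa [Real.dist_eq] at hh)
        linarith
      have hd : h (traj f x u t) - h (traj f y u t) ≤
          (Lh : ℝ) * ((Lf : ℝ) ^ (t : ℕ) * dist x y) :=
        le_trans hhd (mul_le_mul_of_nonneg_left (htraj t) Lh.coe_nonneg)
      have hmul := mul_le_mul_of_nonneg_left hd hαnn
      have hsup : (α : ℝ) ^ (t : ℕ) * (h (traj f y u t) + lam t) ≤
          ⨆ s : Fin k, (α : ℝ) ^ (s : ℕ) * (h (traj f y u s) + lam s) :=
        le_ciSup (f := fun s : Fin k => (α : ℝ) ^ (s : ℕ) * (h (traj f y u s) + lam s))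
          (Set.Finite.bddAbove (Set.finite_range _)) t
      have hcoef := mul_le_mul_of_nonneg_right (hLt t t.2) hdnn
      have hmax : (⨆ s : Fin k, (α : ℝ) ^ (s : ℕ) * (h (traj f y u s) + lam s)) ≤
          max (⨆ s : Fin k, (α : ℝ) ^ (s : ℕ) * (h (traj f y u s) + lam s))
            ((α:ℝ) ^ k * B0 (traj f y u k)) := le_max_left _ _
      nlinarith [hmul, hsup, hcoef, hmax]
    · have hαnn : (0:ℝ) ≤ (α : ℝ) ^ k := pow_nonneg α.coe_nonneg _
      have hB := hB0_lip.dist_le_mul (traj f x u k) (traj f y u k)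
      have hBd : B0 (traj f x u k) - B0 (traj f y u k) ≤
          (LB0 : ℝ) * dist (traj f x u k) (traj f y u k) := by
        have := le_trans (le_abs_self _) (by rwa [Real.dist_eq] at hB)
        linarith
      have hd : B0 (traj f x u k) - B0 (traj f y u k) ≤
          (LB0 : ℝ) * ((Lf : ℝ) ^ k * dist x y) :=
        le_trans hBd (mul_le_mul_of_nonneg_left (htraj k) LB0.coe_nonneg)
      have hmul := mul_le_mul_of_nonneg_left hd hαnn
      have hcoef := mul_le_mul_of_nonneg_right hLk hdnn
      have hmax : (α:ℝ) ^ k * B0 (traj f y u k) ≤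
          max (⨆ s : Fin k, (α : ℝ) ^ (s : ℕ) * (h (traj f y u s) + lam s))
            ((α:ℝ) ^ k * B0 (traj f y u k)) := le_max_right _ _
      nlinarith [hmul, hcoef, hmax]
  apply LipschitzWith.of_dist_le_mul
  intro x y
  obtain ⟨ux, hux, hxeq⟩ := hBk_att x
  obtain ⟨uy, huy, hyeq⟩ := hBk_att y
  have h1 : Bk x ≤ Bk y + L * dist x y := by
    calc Bk x ≤ reachCostGen f h B0 (α : ℝ) lam k x uy := hBk_lb x uy huy
      _ ≤ reachCostGen f h B0 (α : ℝ) lam k y uy + L * dist x y := key x y uy huy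
      _ = Bk y + L * dist x y := by rw [← hyeq]
  have h2 : Bk y ≤ Bk x + L * dist x y := by
    have hk2 := key y x ux hux
    rw [dist_comm y x] at hk2
    calc Bk y ≤ reachCostGen f h B0 (α : ℝ) lam k y ux := hBk_lb y ux hux
      _ ≤ reachCostGen f h B0 (α : ℝ) lam k x ux + L * dist x y := hk2
      _ = Bk x + L * dist x y := by rw [← hxeq]
  rw [Real.dist_eq, abs_sub_le_iff]
  constructor <;> linarith
end

section
/- Let Q(x,u) = B(f(x,u)) where B is a CBF for the original constraint h ≤ 0 satisfying h(x) ≤ B(x) on S_B, and let Q_θ satisfy |Q_θ(x,u) − Q(x,u)| ≤ Δ on Ω × U with S_B ⊆ Ω. Suppose a policy π_θ satisfies Q_θ(x_t, π_θ(x_t)) ≤ 0 and π_θ(x_t) ∈ U at all time steps along the closed-loop trajectory starting from x_0 ∈ S_B, and the trajectory remains in Ω. Then the maximum constraint violation is bounded by Δ: h(x_t) ≤ Δ for all t ≥ 1. -/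
/-- approximate safety filter with error bound Δ: along the
closed loop the constraint violation is at most Δ, i.e. h(x_t) ≤ Δ for t ≥ 1. -/
theorem approximate_filter_violation_bound
    {σ υ : Type*} (f : σ → υ → σ) (h : σ → ℝ) (U : Set υ) (B : σ → ℝ)
    (Ω : Set σ) (Qθ : σ → υ → ℝ) (Δ : ℝ) (hΔ : 0 ≤ Δ)
    -- B is a CBF for the original constraint with h ≤ B (on Ω ⊇ S_B):
    (hSB_sub : {x : σ | B x ≤ 0} ⊆ Ω)
    (hhB : ∀ x ∈ Ω, h x ≤ B x)
    -- uniform approximation error of Qθ for Q = B ∘ f on Ω × U: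
    (herr : ∀ x ∈ Ω, ∀ u ∈ U, |Qθ x u - B (f x u)| ≤ Δ)
    -- closed-loop trajectory under policy πθ:
    (πθ : σ → υ) (x : ℕ → σ)
    (hx0 : x 0 ∈ {x : σ | B x ≤ 0})
    (hstep : ∀ t : ℕ, x (t + 1) = f (x t) (πθ (x t)))
    (hπU : ∀ t : ℕ, πθ (x t) ∈ U)
    (hπQ : ∀ t : ℕ, Qθ (x t) (πθ (x t)) ≤ 0)
    (hΩ : ∀ t : ℕ, x t ∈ Ω) :
    ∀ t : ℕ, 1 ≤ t → h (x t) ≤ Δ := by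
  intro t ht
  obtain ⟨s, rfl⟩ := Nat.exists_eq_add_of_le ht
  rw [Nat.add_comm]
  have he := herr (x s) (hΩ s) (πθ (x s)) (hπU s)
  have hB : B (x (s + 1)) ≤ Δ := by
    rw [hstep s]
    have := abs_le.mp he
    linarith [hπQ s, this.1]
  calc h (x (s + 1)) ≤ B (x (s + 1)) := hhB _ (hΩ _)
    _ ≤ Δ := hB
end

section
/- Let Q(x,u) = B(f(x,u)) where B is a CBF for the tightened constraint h + λ ≤ 0 with h(x) + λ ≤ B(x) on S_B, and let |Q_θ − Q| ≤ Δ on Ω × U with Δ ≤ λ and S_B ⊆ Ω. If a policy π_θ satisfies Q_θ(x_t, π_θ(x_t)) ≤ 0 at every time step along the closed-loop trajectory from x_0 ∈ S_B (trajectory staying in Ω), then the original constraint is satisfied exactly: h(x_t) ≤ 0 for all t ≥ 1. -/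
/-- with a CBF for the tightened constraint h + λ ≤ 0 and
approximation error Δ ≤ λ, the approximate filter guarantees exact
satisfaction of the original constraint: h(x_t) ≤ 0 for t ≥ 1. -/
theorem approximate_filter_tightened_exact_safety
    {σ υ : Type*} (f : σ → υ → σ) (h : σ → ℝ) (U : Set υ) (B : σ → ℝ)
    (Ω : Set σ) (Qθ : σ → υ → ℝ) (Δ lam : ℝ)
    (hΔ : 0 ≤ Δ) (hΔlam : Δ ≤ lam)
    -- B is a CBF for the tightened constraint with h + λ ≤ B (on Ω ⊇ S_B):
    (hSB_sub : {x : σ | B x ≤ 0} ⊆ Ω)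
    (hhB : ∀ x ∈ Ω, h x + lam ≤ B x)
    -- uniform approximation error of Qθ for Q = B ∘ f on Ω × U:
    (herr : ∀ x ∈ Ω, ∀ u ∈ U, |Qθ x u - B (f x u)| ≤ Δ)
    -- closed-loop trajectory under policy πθ:
    (πθ : σ → υ) (x : ℕ → σ)
    (hx0 : x 0 ∈ {x : σ | B x ≤ 0})
    (hstep : ∀ t : ℕ, x (t + 1) = f (x t) (πθ (x t)))
    (hπU : ∀ t : ℕ, πθ (x t) ∈ U)
    (hπQ : ∀ t : ℕ, Qθ (x t) (πθ (x t)) ≤ 0)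
    (hΩ : ∀ t : ℕ, x t ∈ Ω) :
    ∀ t : ℕ, 1 ≤ t → h (x t) ≤ 0 := by
  intro t ht
  obtain ⟨s, rfl⟩ : ∃ s, t = s + 1 := ⟨t - 1, by omega⟩
  have herr' := herr (x s) (hΩ s) (πθ (x s)) (hπU s)
  rw [← hstep s] at herr'
  have hB : B (x (s + 1)) ≤ Δ := by
    have := abs_le.mp herr'
    linarith [hπQ s, this.1]
  have := hhB (x (s + 1)) (hΩ (s + 1))
  linarith
end

section
/- Let B be a λ-contractive-set CBF (min_{u∈U} B(f(x,u)) ≤ −λ for all x ∈ S_B), Q(x,u) = B(f(x,u)), and suppose |Q_θ(x,u) − Q(x,u)| ≤ Δ on Ω × U with Δ ≤ λ/2 and S_B ⊆ Ω. Then the tightened filter constraint Q_θ(x,u) ≤ −λ + Δ is recursively feasible from any x_0 ∈ S_B: (a) for every x ∈ S_B there exists u ∈ U with Q_θ(x,u) ≤ −λ + Δ; (b) every u ∈ U with Q_θ(x,u) ≤ −λ + Δ yields f(x,u) ∈ S_B. Consequently any policy π_θ selecting such inputs keeps the closed-loop trajectory in S_B and satisfies h(x_t) ≤ 0 for all t ≥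 0. -/
/-- with a λ-contractive-set CBF and approximation error
Δ ≤ λ/2, the tightened filter constraint Qθ(x,u) ≤ −λ + Δ is recursively
feasible and keeps the closed loop safe. -/
theorem contractive_filter_recursive_feasibility
    {σ υ : Type*} (f : σ → υ → σ) (h : σ → ℝ) (U : Set υ) (B : σ → ℝ)
    (Ω : Set σ) (Qθ : σ → υ → ℝ) (Δ lam : ℝ)
    (hlam : 0 < lam) (hΔ : 0 ≤ Δ) (hΔlam : Δ ≤ lam / 2)
    -- B is a λ-contractive-set CBF with safe set S_B = {B ≤ 0}, h ≤ 0 on S_B: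
    (hSB_ne : {x : σ | B x ≤ 0}.Nonempty)
    (hSB_safe : ∀ x, B x ≤ 0 → h x ≤ 0)
    (hSB_contr : ∀ x, B x ≤ 0 → ∃ u ∈ U, B (f x u) ≤ -lam)
    (hSB_sub : {x : σ | B x ≤ 0} ⊆ Ω)
    -- uniform approximation error of Qθ for Q = B ∘ f on Ω × U:
    (herr : ∀ x ∈ Ω, ∀ u ∈ U, |Qθ x u - B (f x u)| ≤ Δ) :
    -- (a) feasibility of the tightened filter constraint on S_B:
    (∀ x, B x ≤ 0 → ∃ u ∈ U, Qθ x u ≤ -lam + Δ) ∧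
    -- (b) any feasible input keeps the state in S_B:
    (∀ x, B x ≤ 0 → ∀ u ∈ U, Qθ x u ≤ -lam + Δ → B (f x u) ≤ 0) ∧
    -- (c) any policy selecting such inputs keeps the trajectory in S_B
    --     and satisfies the constraint for all t ≥ 0:
    (∀ (πθ : σ → υ), (∀ x, B x ≤ 0 → πθ x ∈ U ∧ Qθ x (πθ x) ≤ -lam + Δ) →
      ∀ (x : ℕ → σ), B (x 0) ≤ 0 →
        (∀ t : ℕ, x (t + 1) = f (x t) (πθ (x t))) →
        ∀ t : ℕ, B (x t) ≤ 0 ∧ h (x t) ≤ 0) := by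
  have ha : ∀ x, B x ≤ 0 → ∃ u ∈ U, Qθ x u ≤ -lam + Δ := by
    intro x hx
    obtain ⟨u, hu, hBu⟩ := hSB_contr x hx
    refine ⟨u, hu, ?_⟩
    have := herr x (hSB_sub hx) u hu
    have := abs_le.mp this
    linarith [this.2]
  have hb : ∀ x, B x ≤ 0 → ∀ u ∈ U, Qθ x u ≤ -lam + Δ → B (f x u) ≤ 0 := by
    intro x hx u hu hQ
    have := abs_le.mp (herr x (hSB_sub hx) u hu)
    linarith [this.1]
  refine ⟨ha, hb, ?_⟩
  intro πθ hπ x hx0 hstep t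
  have hB : ∀ t, B (x t) ≤ 0 := by
    intro t
    induction t with
    | zero => exact hx0
    | succ n ih =>
      obtain ⟨hu, hQ⟩ := hπ (x n) ih
      rw [hstep n]
      exact hb (x n) ih _ hu hQ
  exact ⟨hB t, hSB_safe _ (hB t)⟩
end

section
/- Robustness to model mismatch: let f be a nominal model and f_r the real dynamics with ‖f(x,u) − f_r(x,u)‖ ≤ κ on Ω × U, B a λ-contractive-set CBF for the nominal system with Lipschitz constant L_B, Q = B∘f, and |Q_θ − Q| ≤ Δ on Ω × U. If λ ≥ 2Δ + L_B κ, then the filter constraint Q_θ(x,u) ≤ −λ + Δ is recursively feasible for the real system from any x_0 ∈ S_B, and the real closed-loop trajectory x_{t+1} = f_r(x_t, π_θ(x_t)) remains in S_B and satisfies h(x_t) ≤ 0 for all t. -/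
open NNReal

/-- robustness to model mismatch: if ‖f − f_r‖ ≤ κ on Ω × U,
B is a λ-contractive-set CBF for the nominal model with Lipschitz constant
L_B, |Qθ − Q| ≤ Δ and λ ≥ 2Δ + L_B κ, then the filter constraint
Qθ(x,u) ≤ −λ + Δ is recursively feasible for the real system and keeps the
real closed loop in S_B with h ≤ 0. -/
theorem robust_contractive_filter
    {σ υ : Type*} [NormedAddCommGroup σ]
    (f fr : σ → υ → σ) (h : σ → ℝ) (U : Set υ) (B : σ → ℝ)
    (Ω : Set σ) (Qθ : σ → υ → ℝ) (Δ lam κ : ℝ) (LB : ℝ≥0)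
    (hlam : 0 < lam) (hΔ : 0 ≤ Δ) (hκ : 0 ≤ κ)
    (hmargin : 2 * Δ + (LB : ℝ) * κ ≤ lam)
    -- model mismatch bound on Ω × U:
    (hmis : ∀ x ∈ Ω, ∀ u ∈ U, ‖f x u - fr x u‖ ≤ κ)
    -- B is a λ-contractive-set CBF for the nominal system, Lipschitz:
    (hB_lip : LipschitzWith LB B)
    (hSB_ne : {x : σ | B x ≤ 0}.Nonempty)
    (hSB_safe : ∀ x, B x ≤ 0 → h x ≤ 0)
    (hSB_contr : ∀ x, B x ≤ 0 → ∃ u ∈ U, B (f x u) ≤ -lam)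
    (hSB_sub : {x : σ | B x ≤ 0} ⊆ Ω)
    -- uniform approximation error of Qθ for Q = B ∘ f on Ω × U:
    (herr : ∀ x ∈ Ω, ∀ u ∈ U, |Qθ x u - B (f x u)| ≤ Δ) :
    -- (a) feasibility of the filter constraint on S_B:
    (∀ x, B x ≤ 0 → ∃ u ∈ U, Qθ x u ≤ -lam + Δ) ∧
    -- (b) any feasible input keeps the *real* successor state in S_B:
    (∀ x, B x ≤ 0 → ∀ u ∈ U, Qθ x u ≤ -lam + Δ → B (fr x u) ≤ 0) ∧
    -- (c) the real closed loop stays in S_B and satisfies h ≤ 0: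
    (∀ (πθ : σ → υ), (∀ x, B x ≤ 0 → πθ x ∈ U ∧ Qθ x (πθ x) ≤ -lam + Δ) →
      ∀ (x : ℕ → σ), B (x 0) ≤ 0 →
        (∀ t : ℕ, x (t + 1) = fr (x t) (πθ (x t))) →
        ∀ t : ℕ, B (x t) ≤ 0 ∧ h (x t) ≤ 0) := by

  have hb : ∀ x, B x ≤ 0 → ∀ u ∈ U, Qθ x u ≤ -lam + Δ → B (fr x u) ≤ 0 := by
    intro x hx u hu hq
    have hxΩ : x ∈ Ω := hSB_sub hx
    have h1 : |Qθ x u - B (f x u)| ≤ Δ := herr x hxΩ u hu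
    have h2 : B (f x u) ≤ Qθ x u + Δ := by
      have := abs_le.mp h1; linarith [this.1]
    have h3 : |B (f x u) - B (fr x u)| ≤ (LB : ℝ) * κ := by
      have hd := hB_lip.dist_le_mul (f x u) (fr x u)
      rw [Real.dist_eq] at hd
      exact hd.trans (mul_le_mul_of_nonneg_left (by
        rw [dist_eq_norm]; exact hmis x hxΩ u hu) LB.coe_nonneg)
    have h4 : B (fr x u) ≤ B (f x u) + (LB : ℝ) * κ := by
      have := abs_le.mp h3; linarith [this.1]
    linarith
  refine ⟨?_, hb, ?_⟩
  · intro x hx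
    obtain ⟨u, hu, hc⟩ := hSB_contr x hx
    refine ⟨u, hu, ?_⟩
    have h1 := abs_le.mp (herr x (hSB_sub hx) u hu)
    linarith [h1.1]
  · intro πθ hπ x hx0 hrec
    have key : ∀ t, B (x t) ≤ 0 := by
      intro t
      induction t with
      | zero => exact hx0
      | succ n ih =>
        obtain ⟨hu, hq⟩ := hπ (x n) ih
        rw [hrec n]
        exact hb (x n) ih (πθ (x n)) hu hq
    exact fun t => ⟨key t, hSB_safe _ (key t)⟩
end

section
/- For matrices E ≻ 0, Y, and scalars p > 0, γ > 0: the LMI block condition [[pE, (AE + BY)ᵀ], [AE + BY, E]] ⪰ 0 implies that the quadratic function B_0(x) = xᵀE⁻¹x − γ with linear feedback u = YE⁻¹x satisfies B_0(Ax + Bu(x)) ≤ p·B_0(x) + (p−1)γ for all x with B_0(x) ≤ 0 (indeed for all x). -/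
open Matrix

section Schur

variable {ι κ : Type*} [Fintype ι] [Fintype κ] [DecidableEq κ]
  {P : Matrix ι ι ℝ} {M : Matrix κ ι ℝ} {E : Matrix κ κ ℝ}

theorem Matrix.PosSemidef.sub_transpose_mul_inv_mul_of_fromBlocks (hE : E.PosDef)
    (h : (fromBlocks P Mᵀ M E).PosSemidef) : (P - Mᵀ * E⁻¹ * M).PosSemidef := by
  let _ := hE.isUnit.invertible
  simpa using (PosDef.fromBlocks₂₂ P Mᵀ hE).1 (by simpa using h)

theorem Matrix.PosSemidef.dotProduct_inv_mulVec_le_of_fromBlocks (hE : E.PosDef)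
    (h : (fromBlocks P Mᵀ M E).PosSemidef) (w : ι → ℝ) :
    (M *ᵥ w) ⬝ᵥ (E⁻¹ *ᵥ (M *ᵥ w)) ≤ w ⬝ᵥ (P *ᵥ w) := by
  have hschur := (h.sub_transpose_mul_inv_mul_of_fromBlocks hE).dotProduct_mulVec_nonneg w
  rw [star_trivial, sub_mulVec, dotProduct_sub, ← mulVec_mulVec, ← mulVec_mulVec,
    dotProduct_mulVec w Mᵀ, vecMul_transpose] at hschur
  linarith

end Schur

theorem lmi_implies_decrease_general
    {n m : ℕ} (A : Matrix (Fin n) (Fin n) ℝ) (B : Matrix (Fin n) (Fin m) ℝ)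
    (E : Matrix (Fin n) (Fin n) ℝ) (Y : Matrix (Fin m) (Fin n) ℝ)
    (p γ : ℝ)
    (hE : E.PosDef)
    (hLMI : (Matrix.fromBlocks (p • E) (A * E + B * Y)ᵀ
      (A * E + B * Y) E).PosSemidef) :
    ∀ x : Fin n → ℝ,
      (fun z : Fin n → ℝ => z ⬝ᵥ (E⁻¹ *ᵥ z) - γ)
          (A *ᵥ x + B *ᵥ ((Y * E⁻¹) *ᵥ x)) ≤
        p * ((fun z : Fin n → ℝ => z ⬝ᵥ (E⁻¹ *ᵥ z) - γ) x) + (p - 1) * γ := by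
  intro x
  have hdet : IsUnit E.det := hE.isUnit.map detMonoidHom
  have hclosed : A *ᵥ x + B *ᵥ ((Y * E⁻¹) *ᵥ x) = (A * E + B * Y) *ᵥ (E⁻¹ *ᵥ x) := by
    rw [add_mulVec, mulVec_mulVec, mulVec_mulVec, mulVec_mulVec, Matrix.mul_assoc,
      mul_nonsing_inv E hdet, Matrix.mul_one, Matrix.mul_assoc]
  have hquad : (E⁻¹ *ᵥ x) ⬝ᵥ ((p • E) *ᵥ (E⁻¹ *ᵥ x)) = p * (x ⬝ᵥ (E⁻¹ *ᵥ x)) := by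
    rw [smul_mulVec, mulVec_mulVec, mul_nonsing_inv E hdet, one_mulVec, dotProduct_smul,
      smul_eq_mul, dotProduct_comm]
  have hschur := hLMI.dotProduct_inv_mulVec_le_of_fromBlocks hE (E⁻¹ *ᵥ x)
  simp only [hclosed]
  linarith

/-- the LMI [[pE, (AE+BY)ᵀ], [AE+BY, E]] ⪰ 0 implies that
B_0(x) = xᵀE⁻¹x − γ with feedback u = YE⁻¹x satisfies
B_0(Ax + Bu(x)) ≤ p·B_0(x) + (p−1)γ for all x. -/
theorem lmi_implies_decrease
    {n m : ℕ} (A : Matrix (Fin n) (Fin n) ℝ) (B : Matrix (Fin n) (Fin m) ℝ)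
    (E : Matrix (Fin n) (Fin n) ℝ) (Y : Matrix (Fin m) (Fin n) ℝ)
    (p γ : ℝ) (hp : 0 < p) (hγ : 0 < γ)
    (hE : E.PosDef)
    (hLMI : (Matrix.fromBlocks (p • E) (A * E + B * Y)ᵀ
      (A * E + B * Y) E).PosSemidef) :
    ∀ x : Fin n → ℝ,
      (fun z : Fin n → ℝ => z ⬝ᵥ (E⁻¹ *ᵥ z) - γ)
          (A *ᵥ x + B *ᵥ ((Y * E⁻¹) *ᵥ x)) ≤
        p * ((fun z : Fin n → ℝ => z ⬝ᵥ (E⁻¹ *ᵥ z) - γ) x) + (p - 1) * γ :=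
  lmi_implies_decrease_general A B E Y p γ hE hLMI
end

section
/- For E ≻ 0, Y ∈ ℝ^{m×n}, γ > 0, a row vector H_i ∈ ℝ^{1×m} and scalar h_i > 0: the LMI [[h_i², H_i Y], [(H_i Y)ᵀ, E/γ]] ⪰ 0 implies that the linear feedback u(x) = YE⁻¹x satisfies the constraint H_i u(x) ≤ h_i for every x in the ellipsoid {x | xᵀE⁻¹x ≤ γ}. -/
open Matrix

/-!
Testing the LMI against the vector `(t, z)` gives a quadratic in `t` that is nonnegative
everywhere, so its discriminant is nonpositive: `(H_i Y z)² ≤ h_i² · γ⁻¹ zᵀEz`. For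
`z = E⁻¹x` with `x` in the ellipsoid, `zᵀEz = xᵀE⁻¹x ≤ γ`, hence `H_i Y E⁻¹ x ≤ h_i`.
-/

namespace Matrix

variable {ι : Type*} [Fintype ι]

theorem dotProduct_fromBlocks_unit_mulVec (a t : ℝ) (b z : ι → ℝ) (C : Matrix ι ι ℝ) :
    Sum.elim (fun _ : Unit => t) z ⬝ᵥ
        (fromBlocks (of fun _ _ : Unit => a) (of fun _ j => b j) (of fun i _ => b i) C *ᵥ
          Sum.elim (fun _ : Unit => t) z) =
      a * (t * t) + 2 * (b ⬝ᵥ z) * t + z ⬝ᵥ (C *ᵥ z) := by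
  have hcol : (of fun i (_ : Unit) => b i) *ᵥ (fun _ => t) = t • b := by
    ext i; simp [mulVec, dotProduct, mul_comm]
  have hrow : (of fun (_ : Unit) j => b j) *ᵥ z = fun _ => b ⬝ᵥ z := by
    ext; simp [mulVec, dotProduct]
  rw [fromBlocks_mulVec, sumElim_dotProduct_sumElim, Sum.elim_comp_inl, Sum.elim_comp_inr,
    hcol, hrow, dotProduct_add, dotProduct_add, dotProduct_smul, dotProduct_comm z b]
  simp only [dotProduct, Finset.univ_unique, PUnit.default_eq_unit, mulVec, of_apply,
    Finset.sum_const, Finset.card_singleton, one_smul, smul_eq_mul]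
  ring

theorem PosSemidef.sq_dotProduct_le_of_fromBlocks {a : ℝ} {b : ι → ℝ} {C : Matrix ι ι ℝ}
    (h : (fromBlocks (of fun _ _ : Unit => a) (of fun _ j => b j) (of fun i _ => b i) C).PosSemidef)
    (z : ι → ℝ) : (b ⬝ᵥ z) ^ 2 ≤ a * (z ⬝ᵥ (C *ᵥ z)) := by
  have hquad (t : ℝ) : 0 ≤ a * (t * t) + 2 * (b ⬝ᵥ z) * t + z ⬝ᵥ (C *ᵥ z) := by
    simpa [dotProduct_fromBlocks_unit_mulVec] using
      h.dotProduct_mulVec_nonneg (Sum.elim (fun _ : Unit => t) z)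
  have hdiscr := discrim_le_zero hquad
  rw [discrim] at hdiscr
  linarith

end Matrix

/-- the LMI [[h_i², H_i Y], [(H_i Y)ᵀ, E/γ]] ⪰ 0 implies that
the linear feedback u(x) = YE⁻¹x satisfies H_i u(x) ≤ h_i on the ellipsoid
{x | xᵀE⁻¹x ≤ γ}. -/
theorem lmi_implies_input_constraint
    {n m : ℕ} (E : Matrix (Fin n) (Fin n) ℝ) (Y : Matrix (Fin m) (Fin n) ℝ)
    (γ : ℝ) (hγ : 0 < γ) (hE : E.PosDef)
    (Hi : Fin m → ℝ) (hi : ℝ) (hhi : 0 < hi)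
    (hLMI : (Matrix.fromBlocks
        (Matrix.of fun _ _ : Unit => hi ^ 2)
        (Matrix.of fun (_ : Unit) (j : Fin n) => (Hi ᵥ* Y) j)
        (Matrix.of fun (i : Fin n) (_ : Unit) => (Hi ᵥ* Y) i)
        (γ⁻¹ • E)).PosSemidef) :
    ∀ x : Fin n → ℝ, x ⬝ᵥ (E⁻¹ *ᵥ x) ≤ γ →
      Hi ⬝ᵥ ((Y * E⁻¹) *ᵥ x) ≤ hi := by
  intro x hx
  set z := E⁻¹ *ᵥ x
  have hEz : E *ᵥ z = x := by
    rw [mulVec_mulVec, mul_nonsing_inv E hE.det_pos.ne'.isUnit, one_mulVec]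
  have hz : γ⁻¹ * (z ⬝ᵥ (E *ᵥ z)) ≤ 1 := by
    rw [inv_mul_le_iff₀ hγ, mul_one, hEz, dotProduct_comm]
    exact hx
  have hcs := hLMI.sq_dotProduct_le_of_fromBlocks z
  rw [smul_mulVec, dotProduct_smul, smul_eq_mul] at hcs
  rw [← mulVec_mulVec, dotProduct_mulVec]
  refine le_of_sq_le_sq ?_ hhi.le
  exact hcs.trans (mul_le_of_le_one_right (sq_nonneg hi) hz)
end
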